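/- For every m ∈ ℕ^l the following identity holds in F = ℚ(q, z_1,…,z_l): ∑_{0 ≤ a ≤ m} J_a(z^{−1}·q^{−Ca+2}) · J_{m−a}(z·q^{Ca}) = ∏_{i=1}^l 1/(q)_{m_i}, where J_a(z^{−1}·q^{−Ca+2}) denotes the image of J_a under the substitution z_i ↦ z_i^{−1} q^{−(Ca)_i + 2}, J_{m−a}(z·q^{Ca}) the image of J_{m−a} under z_i ↦ z_i q^{(Ca)_i}, and (Ca)_i = ∑_j C_{ij} a_j. (In the notation of the paper: ∑_{α ∈ Q_+} J^{α−λ−2ρ}_α J^{λ−α}_{β−α} = 1/(q)_β for simply-laced g.) -/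

import Mathlib

/- STATEMENT 16: in F = ℚ(q,z_1,…,z_l), for a simply-laced Cartan matrix C:
     ∑_{0≤a≤m} J_a(z⁻¹·q^{−Ca+2}) · J_{m−a}(z·q^{Ca}) = ∏_i 1/(q)_{m_i},
   where the substituted J's are the (unique) solutions of the fermionic
   recursion in the substituted variables. -/

noncomputable section

open scoped BigOperators

/-- The field ℚ(q, z_1, …, z_l). -/
abbrev F16 (l : ℕ) : Type := FractionRing (MvPolynomial (Fin (l + 1)) ℚ)

/-- the variable q -/
def q16 (l : ℕ) : F16 l :=
  algebraMap (MvPolynomial (Fin (l + 1)) ℚ) (F16 l) (MvPolynomial.X 0)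

/-- the variables z_i -/
def z16 (l : ℕ) (i : Fin l) : F16 l :=
  algebraMap (MvPolynomial (Fin (l + 1)) ℚ) (F16 l) (MvPolynomial.X i.succ)

/-- `W(a) = (1/2)∑ C_{ij} a_i a_j − ∑ a_i`  (the double sum is even, so integer
division by 2 gives the exact value). -/
def W16 {l : ℕ} (C : Matrix (Fin l) (Fin l) ℤ) (a : Fin l → ℕ) : ℤ :=
  (∑ i, ∑ j, C i j * a i * a j) / 2 - ∑ i, (a i : ℤ)

/-- `(Ca)_i = ∑_j C_{ij} a_j` -/
def Cv {l : ℕ} (C : Matrix (Fin l) (Fin l) ℤ) (a : Fin l → ℕ) (i : Fin l) : ℤ :=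
  ∑ j, C i j * a j

/-- `(q)_n = ∏_{k=1}^n (1 − q^k)` -/
def qP {F : Type} [Field F] (q : F) (n : ℕ) : F :=
  ∏ k ∈ Finset.range n, (1 - q ^ (k + 1))

/-- `J` is the family satisfying `J 0 = 1` and the fermionic recursion with
variables `q`, `z` (simply-laced case). -/
def IsFermC {l : ℕ} (C : Matrix (Fin l) (Fin l) ℤ)
    {F : Type} [Field F] (q : F) (z : Fin l → F) (J : (Fin l → ℕ) → F) : Prop :=
  J 0 = 1 ∧ ∀ m : Fin l → ℕ, J m = ∑ a ∈ Finset.Iic m,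
    (∏ i, z i ^ a i) * q ^ (W16 C a) *
      (∏ i, qP q (m i - a i))⁻¹ * J a

/-!
Put `S(ν, β) = ∑_{α ≤ β} J^{ν+α}_-(α) J^{ν+α}_+(β - α)` and `P(β) = ∏ᵢ 1/(q)_{βᵢ}`, so that the
theorem says `S(0, m) = P(m)`. Let `ε` be the coefficients of the inverse of the q-exponential
`∏ᵢ ∑ₙ xᵢⁿ/(q)ₙ`, whose coefficients are `P`. The weights `w(ν, δ) = z^δ q^{⟨Cν, δ⟩ + W(δ)}` of the
`J_+` recursion satisfy the cocycle rule `w(ν, α + γ) = w(ν, α) w(ν + α, γ)`, and the weights of the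
`J_-` recursion at `α` are `w(ν, α)⁻¹`. Expanding `J_+` by its recursion and `J_-` by its recursion
inverted against `ε` therefore gives
  `S(ν, β) = ∑_{δ ≤ β} P(β - δ) w(ν, δ) ∑_{d ≤ δ} ε(d) S(ν + d, δ - d)`,
a recursion that `P` satisfies as well since `ε * P = 1`. By induction on `β`, only the term
`δ = β, d = 0` survives in the recursion for `S - P`, which gives `(1 - w(ν, β)) (S - P)(ν, β) = 0`;
and `w(ν, β) = z^β q^e ≠ 1` for `β ≠ 0`.
-/

open Finset

section IicSums

variable {ι : Type*} [Fintype ι] [DecidableEq ι] {M : Type*} [AddCommMonoid M]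

lemma sum_Iic_comp_tsub (m : ι → ℕ) (f : (ι → ℕ) → M) :
    ∑ d ∈ Iic m, f (m - d) = ∑ d ∈ Iic m, f d :=
  sum_nbij' (m - ·) (m - ·) (by simp) (by simp)
    (fun _ hd => tsub_tsub_cancel_of_le (mem_Iic.1 hd))
    (fun _ hd => tsub_tsub_cancel_of_le (mem_Iic.1 hd)) (fun _ _ => rfl)

lemma sum_Icc_eq_sum_Iic_tsub {a m : ι → ℕ} (ham : a ≤ m) (f : (ι → ℕ) → M) :
    ∑ b ∈ Icc a m, f b = ∑ e ∈ Iic (m - a), f (a + e) := by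
  refine (sum_nbij' (a + ·) (· - a) (fun e he => ?_) (fun b hb => ?_)
    (fun e _ => add_tsub_cancel_left a e) (fun b hb => add_tsub_cancel_of_le (mem_Icc.1 hb).1)
    fun _ _ => rfl).symm
  · simpa [le_tsub_iff_left ham] using he
  · simpa using tsub_le_tsub_right (mem_Icc.1 hb).2 a

lemma sum_Iic_sum_Iic_eq_sum_Iic_sum_Iic_tsub (m : ι → ℕ) (f : (ι → ℕ) → (ι → ℕ) → M) :
    ∑ b ∈ Iic m, ∑ a ∈ Iic b, f a b = ∑ a ∈ Iic m, ∑ e ∈ Iic (m - a), f a (a + e) := by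
  rw [sum_comm' (t' := Iic m) (s' := fun a => Icc a m)]
  · exact sum_congr rfl fun a ha => sum_Icc_eq_sum_Iic_tsub (mem_Iic.1 ha) _
  · intro b a
    simp only [mem_Iic, mem_Icc]
    exact ⟨fun ⟨hbm, hab⟩ => ⟨⟨hab, hbm⟩, hab.trans hbm⟩, fun ⟨⟨hab, hbm⟩, _⟩ => ⟨hbm, hab⟩⟩

lemma sum_Iic_sum_Iic_tsub_comm (m : ι → ℕ) (f : (ι → ℕ) → (ι → ℕ) → M) :
    ∑ a ∈ Iic m, ∑ e ∈ Iic (m - a), f a e = ∑ e ∈ Iic m, ∑ a ∈ Iic (m - e), f a e := by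
  refine sum_comm' fun a e => ?_
  simp only [mem_Iic]
  constructor
  · rintro ⟨ham, hem⟩
    have hae := (le_tsub_iff_left ham).1 hem
    exact ⟨le_tsub_of_add_le_right hae, le_of_add_le_right hae⟩
  · rintro ⟨hem, ham⟩
    have hae := (le_tsub_iff_left ham).1 hem
    exact ⟨le_of_add_le_right hae, le_tsub_of_add_le_right hae⟩

end IicSums

section QExp

variable {K : Type} [Field K] {ι : Type*} [Fintype ι]

def qExpSeries (q : K) : PowerSeries K :=
  PowerSeries.mk fun n => (qP q n)⁻¹

def qExpCoeff (q : K) (m : ι → ℕ) : K :=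
  ∏ i, (qP q (m i))⁻¹

def qExpInvCoeff (q : K) (m : ι → ℕ) : K :=
  ∏ i, PowerSeries.coeff (m i) (qExpSeries q)⁻¹

lemma constantCoeff_qExpSeries (q : K) : PowerSeries.constantCoeff (qExpSeries q) = 1 := by
  simp [qExpSeries, qP]

@[simp]
lemma qExpCoeff_zero (q : K) : qExpCoeff q (0 : ι → ℕ) = 1 := by
  simp [qExpCoeff, qP]

@[simp]
lemma qExpInvCoeff_zero (q : K) : qExpInvCoeff q (0 : ι → ℕ) = 1 := by
  simp [qExpInvCoeff, PowerSeries.coeff_zero_eq_constantCoeff_apply,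
    PowerSeries.constantCoeff_inv, constantCoeff_qExpSeries]

lemma sum_Iic_prod_mul_prod_tsub [DecidableEq ι] {f g : ℕ → K}
    (hfg : ∀ n, ∑ p ∈ antidiagonal n, f p.1 * g p.2 = if n = 0 then 1 else 0) (m : ι → ℕ) :
    ∑ d ∈ Iic m, (∏ i, f (d i)) * ∏ i, g (m i - d i) = if m = 0 then 1 else 0 := by
  simp_rw [← prod_mul_distrib]
  rw [show Iic m = Fintype.piFinset fun i => Iic (m i) from rfl,
    ← prod_univ_sum (fun i => Iic (m i)) fun i j => f j * g (m i - j)]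
  have hfg' : ∀ n, ∑ j ∈ Iic n, f j * g (n - j) = if n = 0 then 1 else 0 := fun n => by
    rw [← Nat.range_succ_eq_Iic, ← hfg n,
      Nat.sum_antidiagonal_eq_sum_range_succ fun i j => f i * g j]
  simp only [hfg', prod_boole, mem_univ, true_imp_iff, funext_iff, Pi.zero_apply]

lemma sum_Iic_qExpInvCoeff_mul_qExpCoeff [DecidableEq ι] (q : K) (m : ι → ℕ) :
    ∑ d ∈ Iic m, qExpInvCoeff q d * qExpCoeff q (m - d) = if m = 0 then 1 else 0 := by
  have hinv : (qExpSeries q)⁻¹ * qExpSeries q = 1 :=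
    PowerSeries.inv_mul_cancel _ (by simp [constantCoeff_qExpSeries])
  have h := sum_Iic_prod_mul_prod_tsub (f := fun n => PowerSeries.coeff n (qExpSeries q)⁻¹)
    (g := fun n => PowerSeries.coeff n (qExpSeries q))
    (fun n => by rw [← PowerSeries.coeff_mul, hinv, PowerSeries.coeff_one]) m
  simp only [qExpSeries, PowerSeries.coeff_mk] at h
  exact h

lemma sum_Iic_qExpInvCoeff_tsub_mul_qExpCoeff [DecidableEq ι] (q : K) (m : ι → ℕ) :
    ∑ e ∈ Iic m, qExpInvCoeff q (m - e) * qExpCoeff q e = if m = 0 then 1 else 0 := by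
  rw [← sum_Iic_comp_tsub, ← sum_Iic_qExpInvCoeff_mul_qExpCoeff q m]
  refine sum_congr rfl fun d hd => ?_
  rw [tsub_tsub_cancel_of_le (mem_Iic.1 hd)]

end QExp

section Fermionic

variable {K : Type} [Field K] {l : ℕ} {C : Matrix (Fin l) (Fin l) ℤ} {q : K} {ζ : Fin l → K}
  {J : (Fin l → ℕ) → K}

lemma IsFermC.eq_sum (hJ : IsFermC C q ζ J) (m : Fin l → ℕ) :
    J m = ∑ a ∈ Iic m, (∏ i, ζ i ^ a i) * q ^ W16 C a * qExpCoeff q (m - a) * J a := by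
  rw [hJ.2 m]
  simp only [qExpCoeff, Pi.sub_apply, prod_inv_distrib]

lemma IsFermC.sum_qExpInvCoeff_tsub_mul (hJ : IsFermC C q ζ J) (m : Fin l → ℕ) :
    ∑ b ∈ Iic m, qExpInvCoeff q (m - b) * J b = (∏ i, ζ i ^ m i) * q ^ W16 C m * J m := by
  set X : (Fin l → ℕ) → K := fun a => (∏ i, ζ i ^ a i) * q ^ W16 C a * J a
  calc ∑ b ∈ Iic m, qExpInvCoeff q (m - b) * J b
      = ∑ b ∈ Iic m, ∑ a ∈ Iic b, X a * (qExpInvCoeff q (m - b) * qExpCoeff q (b - a)) := by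
        refine sum_congr rfl fun b _ => ?_
        rw [hJ.eq_sum b, mul_sum]
        exact sum_congr rfl fun a _ => by ring
    _ = ∑ a ∈ Iic m, X a * ∑ e ∈ Iic (m - a), qExpInvCoeff q (m - a - e) * qExpCoeff q e := by
        rw [sum_Iic_sum_Iic_eq_sum_Iic_sum_Iic_tsub]
        simp only [mul_sum, add_tsub_cancel_left, tsub_add_eq_tsub_tsub]
    _ = X m := by
        simp only [sum_Iic_qExpInvCoeff_tsub_mul_qExpCoeff, mul_ite, mul_one, mul_zero]
        rw [sum_eq_single_of_mem m (mem_Iic.2 le_rfl), if_pos (tsub_self m)]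
        intro a ha ham
        exact if_neg fun h => ham (le_antisymm (mem_Iic.1 ha) (tsub_eq_zero_iff_le.1 h))

end Fermionic

lemma even_sum_sum_mul_mul {ι : Type*} [Fintype ι] [LinearOrder ι] {C : Matrix ι ι ℤ}
    (hsym : C.IsSymm) (hdiag : ∀ i, Even (C i i)) (x : ι → ℤ) :
    Even (∑ i, ∑ j, C i j * x i * x j) := by
  set U := ∑ i, ∑ j, if i < j then C i j * x i * x j else 0
  have hsplit : ∀ i j, C i j * x i * x j = (if i = j then C i i * x i * x i else 0) +
      ((if i < j then C i j * x i * x j else 0) + if j < i then C j i * x j * x i else 0) := by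
    intro i j
    rcases lt_trichotomy i j with h | rfl | h
    · simp [h, h.ne, h.not_gt]
    · simp
    · rw [if_neg h.ne', if_neg h.not_gt, if_pos h, hsym.apply i j]
      ring
  have hU : ∑ i, ∑ j, (if j < i then C j i * x j * x i else 0) = U := sum_comm
  rw [sum_congr rfl fun i _ => sum_congr rfl fun j _ => hsplit i j]
  simp only [sum_add_distrib, sum_ite_eq, mem_univ, if_true, hU]
  exact (even_sum _ fun i _ => ((hdiag i).mul_right _).mul_right _).add (Even.add_self U)

section CartanForm

variable {l : ℕ} (C : Matrix (Fin l) (Fin l) ℤ)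

def cartanForm (a b : Fin l → ℕ) : ℤ :=
  ∑ i, Cv C a i * b i

variable {C}

lemma Cv_add (a b : Fin l → ℕ) (i : Fin l) : Cv C (a + b) i = Cv C a i + Cv C b i := by
  simp only [Cv, Pi.add_apply, Nat.cast_add, mul_add, sum_add_distrib]

lemma cartanForm_add_left (a b c : Fin l → ℕ) :
    cartanForm C (a + b) c = cartanForm C a c + cartanForm C b c := by
  simp only [cartanForm, Cv_add, add_mul, sum_add_distrib]

lemma cartanForm_add_right (a b c : Fin l → ℕ) :
    cartanForm C a (b + c) = cartanForm C a b + cartanForm C a c := by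
  simp only [cartanForm, Pi.add_apply, Nat.cast_add, mul_add, sum_add_distrib]

lemma cartanForm_self (a : Fin l → ℕ) :
    cartanForm C a a = ∑ i, ∑ j, C i j * a i * a j := by
  simp only [cartanForm, Cv, sum_mul]
  exact sum_congr rfl fun i _ => sum_congr rfl fun j _ => by ring

lemma cartanForm_comm (hsym : C.IsSymm) (a b : Fin l → ℕ) :
    cartanForm C a b = cartanForm C b a := by
  simp only [cartanForm, Cv, sum_mul]
  rw [sum_comm]
  exact sum_congr rfl fun i _ => sum_congr rfl fun j _ => by rw [hsym.apply i j]; ring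

lemma two_mul_W16 (hsym : C.IsSymm) (hdiag : ∀ i, Even (C i i)) (a : Fin l → ℕ) :
    2 * W16 C a = cartanForm C a a - 2 * ∑ i, (a i : ℤ) := by
  obtain ⟨k, hk⟩ := even_sum_sum_mul_mul hsym hdiag fun i => (a i : ℤ)
  rw [W16, cartanForm_self, hk]
  omega

lemma W16_add (hsym : C.IsSymm) (hdiag : ∀ i, Even (C i i)) (a b : Fin l → ℕ) :
    W16 C (a + b) = W16 C a + W16 C b + cartanForm C a b := by
  have hab := two_mul_W16 hsym hdiag (a + b)
  have ha := two_mul_W16 hsym hdiag a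
  have hb := two_mul_W16 hsym hdiag b
  simp only [cartanForm_add_left, cartanForm_add_right, cartanForm_comm hsym b a, Pi.add_apply,
    Nat.cast_add, sum_add_distrib] at hab
  linarith

end CartanForm

section FermWeight

variable {K : Type} [Field K]

lemma prod_zpow_eq_zpow_sum₀ {ι : Type*} {q : K} (hq : q ≠ 0) (s : Finset ι) (c : ι → ℤ) :
    ∏ i ∈ s, q ^ c i = q ^ ∑ i ∈ s, c i := by
  induction s using Finset.cons_induction with
  | empty => simp
  | cons a s ha ih => rw [prod_cons, sum_cons, zpow_add₀ hq, ih]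

lemma prod_mul_zpow_pow {ι : Type*} [Fintype ι] {q : K} (hq : q ≠ 0) (x : ι → K) (c : ι → ℤ)
    (β : ι → ℕ) : ∏ i, (x i * q ^ c i) ^ β i = (∏ i, x i ^ β i) * q ^ ∑ i, c i * β i := by
  have hpow : ∀ i, (q ^ c i) ^ β i = q ^ (c i * β i) := fun i => by rw [zpow_mul, zpow_natCast]
  simp only [mul_pow, prod_mul_distrib, hpow, prod_zpow_eq_zpow_sum₀ hq]

variable {l : ℕ} (C : Matrix (Fin l) (Fin l) ℤ) (q : K) (z : Fin l → K)

/-- The coefficient of `J_a` in the fermionic recursion in the variables `z_i q^{(Cν)_i}`. -/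
def fermWeight (ν δ : Fin l → ℕ) : K :=
  (∏ i, (z i * q ^ Cv C ν i) ^ δ i) * q ^ W16 C δ

variable {C q z}

lemma fermWeight_eq (hq : q ≠ 0) (ν δ : Fin l → ℕ) :
    fermWeight C q z ν δ = (∏ i, z i ^ δ i) * q ^ (cartanForm C ν δ + W16 C δ) := by
  rw [fermWeight, prod_mul_zpow_pow hq, zpow_add₀ hq, mul_assoc, cartanForm]

@[simp]
lemma fermWeight_zero_right (ν : Fin l → ℕ) : fermWeight C q z ν 0 = 1 := by
  simp [fermWeight, W16]

lemma fermWeight_ne_zero (hq : q ≠ 0) (hz : ∀ i, z i ≠ 0) (ν δ : Fin l → ℕ) :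
    fermWeight C q z ν δ ≠ 0 := by
  rw [fermWeight_eq hq]
  exact mul_ne_zero (prod_ne_zero_iff.2 fun i _ => pow_ne_zero _ (hz i)) (zpow_ne_zero _ hq)

lemma fermWeight_add_right (hsym : C.IsSymm) (hdiag : ∀ i, Even (C i i)) (hq : q ≠ 0)
    (ν α γ : Fin l → ℕ) :
    fermWeight C q z ν (α + γ) = fermWeight C q z ν α * fermWeight C q z (ν + α) γ := by
  have hexp : cartanForm C ν (α + γ) + W16 C (α + γ)
      = (cartanForm C ν α + W16 C α) + (cartanForm C (ν + α) γ + W16 C γ) := by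
    rw [W16_add hsym hdiag, cartanForm_add_left, cartanForm_add_right]
    ring
  simp only [fermWeight_eq hq, Pi.add_apply, pow_add, prod_mul_distrib, hexp, zpow_add₀ hq]
  ring

lemma inv_fermWeight_eq (hsym : C.IsSymm) (hdiag : ∀ i, Even (C i i)) (hq : q ≠ 0)
    (ν α : Fin l → ℕ) :
    (fermWeight C q z ν α)⁻¹
      = (∏ i, ((z i)⁻¹ * q ^ (-(Cv C (ν + α) i) + 2)) ^ α i) * q ^ W16 C α := by
  have hlin : ∑ i, (-(Cv C (ν + α) i) + 2) * (α i : ℤ)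
      = -cartanForm C (ν + α) α + 2 * ∑ i, (α i : ℤ) := by
    simp only [cartanForm, add_mul, neg_mul, sum_add_distrib, sum_neg_distrib, mul_sum]
  have hexp : ∑ i, (-(Cv C (ν + α) i) + 2) * (α i : ℤ) + W16 C α
      = -(cartanForm C ν α + W16 C α) := by
    have := two_mul_W16 hsym hdiag α
    rw [cartanForm_add_left] at hlin
    linarith
  rw [prod_mul_zpow_pow hq, mul_assoc, ← zpow_add₀ hq, hexp, fermWeight_eq hq, mul_inv,
    zpow_neg]
  simp only [inv_pow, prod_inv_distrib]

end FermWeight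

section RecursionOp

variable {K : Type} [Field K] {ι : Type*} [Fintype ι] [DecidableEq ι]

def recursionOp (q : K) (w f : (ι → ℕ) → (ι → ℕ) → K) (ν β : ι → ℕ) : K :=
  ∑ δ ∈ Iic β, qExpCoeff q (β - δ) *
    (w ν δ * ∑ d ∈ Iic δ, qExpInvCoeff q d * f (ν + d) (δ - d))

variable {q : K} {w : (ι → ℕ) → (ι → ℕ) → K}

lemma recursionOp_sub (f g : (ι → ℕ) → (ι → ℕ) → K) (ν β : ι → ℕ) :
    recursionOp q w (fun ν β => f ν β - g ν β) ν β
      = recursionOp q w f ν β - recursionOp q w g ν β := by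
  simp only [recursionOp, mul_sub, sum_sub_distrib]

lemma recursionOp_qExpCoeff (ν β : ι → ℕ) :
    recursionOp q w (fun _ β => qExpCoeff q β) ν β = w ν 0 * qExpCoeff q β := by
  simp [recursionOp, sum_Iic_qExpInvCoeff_mul_qExpCoeff, mul_comm]

/-- Only the term `δ = β`, `d = 0` of `recursionOp q w f ν β` involves `f` at a second argument
not below `β`, and it is `w ν β * f ν β`; so `w ν β ≠ 1` forces a fixed point to vanish. -/
lemma eq_zero_of_eq_recursionOp {f : (ι → ℕ) → (ι → ℕ) → K} (hw : ∀ ν β, β ≠ 0 → w ν β ≠ 1)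
    (hf₀ : ∀ ν, f ν 0 = 0) (hf : ∀ ν β, f ν β = recursionOp q w f ν β) (ν β : ι → ℕ) :
    f ν β = 0 := by
  induction β using WellFoundedLT.induction generalizing ν with
  | _ β ih =>
  rcases eq_or_ne β 0 with rfl | hβ
  · exact hf₀ ν
  have hlower : ∀ δ ∈ Iic β, ∀ d ∈ Iic δ, (δ, d) ≠ (β, 0) → f (ν + d) (δ - d) = 0 := by
    intro δ hδ d hd hne
    refine ih _ (lt_of_le_of_ne (tsub_le_self.trans (mem_Iic.1 hδ)) fun h => hne ?_) _
    obtain rfl : δ = β := le_antisymm (mem_Iic.1 hδ) (h ▸ tsub_le_self)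
    have hd' := tsub_add_cancel_of_le (mem_Iic.1 hd)
    rw [h] at hd'
    rw [add_eq_left.1 hd']
  have hrec : recursionOp q w f ν β = w ν β * f ν β := by
    rw [recursionOp, sum_eq_single_of_mem β (mem_Iic.2 le_rfl),
      sum_eq_single_of_mem 0 (mem_Iic.2 zero_le)]
    · simp
    · intro d hd hd0
      rw [hlower β (mem_Iic.2 le_rfl) d hd (by simp [hd0]), mul_zero]
    · intro δ hδ hδβ
      rw [sum_eq_zero fun d hd => by rw [hlower δ hδ d hd (by simp [hδβ]), mul_zero]]
      simp
  have hfix : (1 - w ν β) * f ν β = 0 := by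
    linear_combination hf ν β + hrec
  exact (mul_eq_zero.1 hfix).resolve_left (sub_ne_zero.2 (hw ν β hβ).symm)

end RecursionOp

section CrossSum

variable {K : Type} [Field K] {l : ℕ} {C : Matrix (Fin l) (Fin l) ℤ} {q : K} {z : Fin l → K}
  {Jneg Jpos : (Fin l → ℕ) → (Fin l → ℕ) → K}

def crossSum (Jneg Jpos : (Fin l → ℕ) → (Fin l → ℕ) → K) (ν β : Fin l → ℕ) : K :=
  ∑ α ∈ Iic β, Jneg (ν + α) α * Jpos (ν + α) (β - α)

lemma crossSum_eq_sum_qExpCoeff_mul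
    (hJpos : ∀ a, IsFermC C q (fun i => z i * q ^ (Cv C a i)) (Jpos a)) (ν β : Fin l → ℕ) :
    crossSum Jneg Jpos ν β = ∑ δ ∈ Iic β, qExpCoeff q (β - δ) *
      ∑ α ∈ Iic δ, fermWeight C q z (ν + α) (δ - α) * (Jneg (ν + α) α * Jpos (ν + α) (δ - α)) := by
  calc crossSum Jneg Jpos ν β
      = ∑ α ∈ Iic β, ∑ c ∈ Iic (β - α), qExpCoeff q (β - α - c) *
          (fermWeight C q z (ν + α) c * (Jneg (ν + α) α * Jpos (ν + α) c)) := by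
        refine sum_congr rfl fun α _ => ?_
        rw [(hJpos (ν + α)).eq_sum, mul_sum]
        exact sum_congr rfl fun c _ => by rw [fermWeight]; ring
    _ = _ := by
        simp only [mul_sum]
        rw [sum_Iic_sum_Iic_eq_sum_Iic_sum_Iic_tsub]
        simp only [add_tsub_cancel_left, tsub_add_eq_tsub_tsub]

lemma sum_fermWeight_mul_eq_fermWeight_mul_sum_crossSum (hsym : C.IsSymm)
    (hdiag : ∀ i, Even (C i i)) (hq : q ≠ 0) (hz : ∀ i, z i ≠ 0)
    (hJneg : ∀ a, IsFermC C q (fun i => (z i)⁻¹ * q ^ (-(Cv C a i) + 2)) (Jneg a))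
    (ν δ : Fin l → ℕ) :
    ∑ α ∈ Iic δ, fermWeight C q z (ν + α) (δ - α) * (Jneg (ν + α) α * Jpos (ν + α) (δ - α))
      = fermWeight C q z ν δ *
          ∑ d ∈ Iic δ, qExpInvCoeff q d * crossSum Jneg Jpos (ν + d) (δ - d) := by
  have hJneg' : ∀ α, (fermWeight C q z ν α)⁻¹ * Jneg (ν + α) α
      = ∑ b ∈ Iic α, qExpInvCoeff q (α - b) * Jneg (ν + α) b := fun α => by
    rw [inv_fermWeight_eq hsym hdiag hq, (hJneg (ν + α)).sum_qExpInvCoeff_tsub_mul]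
  calc ∑ α ∈ Iic δ, fermWeight C q z (ν + α) (δ - α) * (Jneg (ν + α) α * Jpos (ν + α) (δ - α))
      = fermWeight C q z ν δ * ∑ α ∈ Iic δ,
          (fermWeight C q z ν α)⁻¹ * Jneg (ν + α) α * Jpos (ν + α) (δ - α) := by
        rw [mul_sum]
        refine sum_congr rfl fun α hα => ?_
        have hsplit := fermWeight_add_right (z := z) hsym hdiag hq ν α (δ - α)
        rw [add_tsub_cancel_of_le (mem_Iic.1 hα)] at hsplit
        rw [hsplit]
        field_simp [fermWeight_ne_zero hq hz]
    _ = fermWeight C q z ν δ * ∑ α ∈ Iic δ, ∑ b ∈ Iic α,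
          qExpInvCoeff q (α - b) * (Jneg (ν + α) b * Jpos (ν + α) (δ - α)) := by
        simp only [hJneg', sum_mul, mul_assoc]
    _ = _ := by
        rw [sum_Iic_sum_Iic_eq_sum_Iic_sum_Iic_tsub, sum_Iic_sum_Iic_tsub_comm]
        simp only [crossSum, mul_sum, add_tsub_cancel_left]
        refine sum_congr rfl fun d _ => sum_congr rfl fun b _ => ?_
        rw [add_comm b d, ← add_assoc, tsub_add_eq_tsub_tsub]

lemma crossSum_eq_recursionOp (hsym : C.IsSymm) (hdiag : ∀ i, Even (C i i))
    (hq : q ≠ 0) (hz : ∀ i, z i ≠ 0)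
    (hJneg : ∀ a, IsFermC C q (fun i => (z i)⁻¹ * q ^ (-(Cv C a i) + 2)) (Jneg a))
    (hJpos : ∀ a, IsFermC C q (fun i => z i * q ^ (Cv C a i)) (Jpos a)) (ν β : Fin l → ℕ) :
    crossSum Jneg Jpos ν β = recursionOp q (fermWeight C q z) (crossSum Jneg Jpos) ν β := by
  rw [crossSum_eq_sum_qExpCoeff_mul hJpos, recursionOp]
  simp only [sum_fermWeight_mul_eq_fermWeight_mul_sum_crossSum hsym hdiag hq hz hJneg]

theorem crossSum_eq_qExpCoeff (hsym : C.IsSymm) (hdiag : ∀ i, Even (C i i))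
    (hq : q ≠ 0) (hz : ∀ i, z i ≠ 0)
    (hmono : ∀ β : Fin l → ℕ, β ≠ 0 → ∀ e : ℤ, (∏ i, z i ^ β i) * q ^ e ≠ 1)
    (hJneg : ∀ a, IsFermC C q (fun i => (z i)⁻¹ * q ^ (-(Cv C a i) + 2)) (Jneg a))
    (hJpos : ∀ a, IsFermC C q (fun i => z i * q ^ (Cv C a i)) (Jpos a)) (ν β : Fin l → ℕ) :
    crossSum Jneg Jpos ν β = qExpCoeff q β := by
  have hw : ∀ ν β, β ≠ 0 → fermWeight C q z ν β ≠ 1 := fun ν β hβ => by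
    rw [fermWeight_eq hq]
    exact hmono β hβ _
  refine sub_eq_zero.1 (eq_zero_of_eq_recursionOp (q := q) hw
    (f := fun ν β => crossSum Jneg Jpos ν β - qExpCoeff q β) (fun ν => ?_) (fun ν β => ?_) ν β)
  · rw [crossSum, show Iic (0 : Fin l → ℕ) = {0} from Iic_bot]
    simp [(hJneg ν).1, (hJpos ν).1]
  · rw [recursionOp_sub, recursionOp_qExpCoeff, fermWeight_zero_right, one_mul,
      ← crossSum_eq_recursionOp hsym hdiag hq hz hJneg hJpos]

end CrossSum

section RationalFunctions

variable (l : ℕ)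

lemma algebraMap_F16_injective :
    Function.Injective (algebraMap (MvPolynomial (Fin (l + 1)) ℚ) (F16 l)) :=
  IsFractionRing.injective _ _

lemma q16_ne_zero : q16 l ≠ 0 :=
  (map_ne_zero_iff _ (algebraMap_F16_injective l)).2 (MvPolynomial.X_ne_zero _)

lemma z16_ne_zero (i : Fin l) : z16 l i ≠ 0 :=
  (map_ne_zero_iff _ (algebraMap_F16_injective l)).2 (MvPolynomial.X_ne_zero _)

variable {l}

/-- Clearing the denominator of `q^e` gives a polynomial identity `z^β q^n = 1` or `z^β = q^n`,
which fails at the point `z_{i₀} = 0` (where `β_{i₀} ≠ 0`), all other variables `1`. -/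
lemma prod_z16_pow_mul_q16_zpow_ne_one {β : Fin l → ℕ} (hβ : β ≠ 0) (e : ℤ) :
    (∏ i, z16 l i ^ β i) * q16 l ^ e ≠ 1 := by
  obtain ⟨i₀, hi₀ : β i₀ ≠ 0⟩ := Function.ne_iff.1 hβ
  let x : Fin (l + 1) → ℚ := fun j => if j = i₀.succ then 0 else 1
  have hX : MvPolynomial.eval x (∏ i, MvPolynomial.X i.succ ^ β i) = 0 := by
    simp [x, Fin.succ_inj, hi₀]
  have hmap : (∏ i, z16 l i ^ β i)
      = algebraMap (MvPolynomial (Fin (l + 1)) ℚ) (F16 l) (∏ i, MvPolynomial.X i.succ ^ β i) := by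
    simp [z16]
  obtain ⟨n, rfl | rfl⟩ := Int.eq_nat_or_neg e
  · intro h
    have hpoly : (∏ i, MvPolynomial.X i.succ ^ β i) * MvPolynomial.X 0 ^ n = 1 :=
      algebraMap_F16_injective l (by simpa [hmap, q16] using h)
    simpa [hX] using congrArg (MvPolynomial.eval x) hpoly
  · intro h
    have hpoly : ∏ i, MvPolynomial.X i.succ ^ β i = MvPolynomial.X 0 ^ n :=
      algebraMap_F16_injective l (by
        rw [zpow_neg, zpow_natCast, mul_inv_eq_one₀ (pow_ne_zero _ (q16_ne_zero l))] at h
        simpa [hmap, q16] using h)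
    simpa [hX, x, (Fin.succ_ne_zero i₀).symm] using congrArg (MvPolynomial.eval x) hpoly

end RationalFunctions

theorem stmt_16_general (l : ℕ) (C : Matrix (Fin l) (Fin l) ℤ)
    (hsym : C.IsSymm) (hdiag : ∀ i, C i i = 2)
    -- for each a, J in the substituted variables z_i⁻¹ q^{−(Ca)_i + 2}
    (Jneg : (Fin l → ℕ) → (Fin l → ℕ) → F16 l)
    (hJneg : ∀ a, IsFermC C (q16 l)
      (fun i => (z16 l i)⁻¹ * q16 l ^ (-(Cv C a i) + 2)) (Jneg a))
    -- for each a, J in the substituted variables z_i q^{(Ca)_i}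
    (Jpos : (Fin l → ℕ) → (Fin l → ℕ) → F16 l)
    (hJpos : ∀ a, IsFermC C (q16 l)
      (fun i => z16 l i * q16 l ^ (Cv C a i)) (Jpos a)) :
    ∀ m : Fin l → ℕ,
      ∑ a ∈ Finset.Iic m, Jneg a a * Jpos a (m - a)
      = ∏ i, (qP (q16 l) (m i))⁻¹ := by
  intro m
  have h := crossSum_eq_qExpCoeff hsym (fun i => hdiag i ▸ even_two) (q16_ne_zero l)
    (z16_ne_zero l) (fun _ hβ => prod_z16_pow_mul_q16_zpow_ne_one hβ) hJneg hJpos 0 m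
  simpa only [crossSum, qExpCoeff, zero_add] using h

theorem stmt_16 (l : ℕ) (hl : 1 ≤ l) (C : Matrix (Fin l) (Fin l) ℤ)
    (hsym : C.IsSymm) (hdiag : ∀ i, C i i = 2)
    (hoff : ∀ i j, i ≠ j → C i j = 0 ∨ C i j = -1)
    (hposdef : ∀ x : Fin l → ℤ, x ≠ 0 → 0 < ∑ i, ∑ j, C i j * x i * x j)
    -- for each a, J in the substituted variables z_i⁻¹ q^{−(Ca)_i + 2}
    (Jneg : (Fin l → ℕ) → (Fin l → ℕ) → F16 l)
    (hJneg : ∀ a, IsFermC C (q16 l)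
      (fun i => (z16 l i)⁻¹ * q16 l ^ (-(Cv C a i) + 2)) (Jneg a))
    -- for each a, J in the substituted variables z_i q^{(Ca)_i}
    (Jpos : (Fin l → ℕ) → (Fin l → ℕ) → F16 l)
    (hJpos : ∀ a, IsFermC C (q16 l)
      (fun i => z16 l i * q16 l ^ (Cv C a i)) (Jpos a)) :
    ∀ m : Fin l → ℕ,
      ∑ a ∈ Finset.Iic m, Jneg a a * Jpos a (m - a)
      = ∏ i, (qP (q16 l) (m i))⁻¹ :=
  stmt_16_general l C hsym hdiag Jneg hJneg Jpos hJpos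

end
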